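/- Fix q, ℓ ∈ ℕ* with m = 2^q and a BI-DMC W (Willie's channel) with Q_0 = W(·|0) everywhere positive and Q_1 = W(·|1). For each level j ∈ {1,…,q}, let 𝒞_j ⊆ {0,1}^ℓ be a codebook of size M_j, and for j ∈ {0,1,…,q} let P_{Z̃}^{(j)} be the pmf on 𝒵^{mℓ} induced by ℓ uses of the PPM super channel W̃ when levels 1,…,j carry i.i.d. uniform bits and each level j' > j carries a uniformly chosen codeword from 𝒞_{j'}; thus P_{Z̃}^{(0)} = P_{Z̃} is the distribution induced by the full scheme and P_{Z̃}^{(q)} = (Q_PPM^m)^{⊗ℓ}. Let W^j be the level-j equivalent channel built from Q_0, Q_1, let P_{Z̃^{(j)}} be the output pmf of (W^j)^{⊗ℓ} when the input is a uniformly chosen codeword of 𝒞_j, and let Q_{Z̃^{(j)}} be the single-use output pmf of W^j under a uniform input bit. If V(P_{Z̃^{(j)}}, Q_{Z̃^{(j)}}^{⊗ℓ}) ≤ δ_j, then V(P_{Z̃}^{(j−1)}, P_{Z̃}^{(j)}) ≤ δ_j, regardless of the codebooks used at levels j+1,…,q; consequently, if this holds for every j ∈ {1,…,q}, then V(P_{Z̃},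 (Q_PPM^m)^{⊗ℓ}) ≤ Σ_{j=1}^q δ_j. -/

import Mathlib

/-!
Passing from level `t` to level `t + 1` only changes what level `t` carries: a uniformly chosen
codeword becomes uniform bits. Averaging the PPM channel over the uniform bits of the lower levels
and fixing the codewords of the higher levels, the output is that of `ℓ` uses of the level-`t`
equivalent channel followed by a kernel that does not see level `t`: the higher bits select a
block of `2^(t+1)` slots, the equivalent-channel output is written into that block and every other
slot receives independent `Q₀` noise. Total variation does not increase under a kernel, so each
step costs at most `δ t`, and the triangle inequality adds up the steps.
-/

open Finset

def IsPMF {𝒵 : Type} [Fintype 𝒵] (P : 𝒵 → ℝ) : Prop :=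
  (∀ z, 0 ≤ P z) ∧ ∑ z, P z = 1

/-- Least-significant-bit-first binary-to-decimal map. -/
def dIdx (q : ℕ) (x : Fin q → Bool) : ℕ :=
  ∑ j : Fin q, if x j then 2^(j:ℕ) else 0

lemma sum_two_pow (q : ℕ) : ∑ j ∈ Finset.range q, 2^j = 2^q - 1 := by
  induction q with
  | zero => simp
  | succ q ih =>
    rw [Finset.sum_range_succ, ih, pow_succ]
    have : 0 < 2^q := pow_pos (by norm_num) q
    omega

lemma dIdx_lt (q : ℕ) (x : Fin q → Bool) : dIdx q x < 2^q := by
  have h1 : dIdx q x ≤ ∑ j : Fin q, 2^(j:ℕ) := by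
    apply Finset.sum_le_sum
    intro j _
    split <;> simp
  have h2 : ∑ j : Fin q, 2^(j:ℕ) = 2^q - 1 := by
    rw [Fin.sum_univ_eq_sum_range (fun j => 2^j) q, sum_two_pow]
  have : 0 < 2^q := pow_pos (by norm_num) q
  omega

/-- Position (0-indexed) of the `1` in the PPM symbol encoding `x`. -/
def ppmPos (q : ℕ) (x : Fin q → Bool) : Fin (2^q) := ⟨dIdx q x, dIdx_lt q x⟩

/-- PPM super channel of the binary-input channel `W`:
`W̃(yt|x) = P1(y_{d(x)}) ∏_{h ≠ d(x)} P0(y_h)`. -/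
noncomputable def superCh {𝒴 : Type} [Fintype 𝒴] [DecidableEq 𝒴] (W : Bool → 𝒴 → ℝ)
    (q : ℕ) (x : Fin q → Bool) (yt : Fin (2^q) → 𝒴) : ℝ :=
  W true (yt (ppmPos q x)) * ∏ h ∈ univ.erase (ppmPos q x), W false (yt h)

/-- Conditional output pmf of the PPM super channel given the inputs off `S`:
`P_{Ỹ|X_{S^c}}(yt|x_{S^c}) = 2^{−|S|} ∑_{x_S} W̃(yt|x)`. -/
noncomputable def condOut {𝒴 : Type} [Fintype 𝒴] [DecidableEq 𝒴] (W : Bool → 𝒴 → ℝ)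
    (q : ℕ) (S : Finset (Fin q)) (x : Fin q → Bool) (yt : Fin (2^q) → 𝒴) : ℝ :=
  ((2:ℝ)^S.card)⁻¹ * ∑ xs : {i : Fin q // i ∈ S} → Bool,
    superCh W q (fun i => if h : i ∈ S then xs ⟨i, h⟩ else x i) yt

/-- Information density expectation `∑_{x,yt} 2^{−q} W̃(yt|x) log( P(yt|x_{A^c}) / P(yt|x_{B^c}) )`
(natural logarithm); with `A = ∅` and `B = S` this is `I(X_S;Ỹ|X_{S^c})`. -/
noncomputable def infoDen {𝒴 : Type} [Fintype 𝒴] [DecidableEq 𝒴] (W : Bool → 𝒴 → ℝ)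
    (q : ℕ) (A B : Finset (Fin q)) : ℝ :=
  ∑ x : Fin q → Bool, ∑ yt : Fin (2^q) → 𝒴,
    ((2:ℝ)^q)⁻¹ * superCh W q x yt * Real.log (condOut W q A x yt / condOut W q B x yt)

/-- Same with logarithm base 2 (information measured in bits). -/
noncomputable def infoDen2 {𝒴 : Type} [Fintype 𝒴] [DecidableEq 𝒴] (W : Bool → 𝒴 → ℝ)
    (q : ℕ) (A B : Finset (Fin q)) : ℝ :=
  ∑ x : Fin q → Bool, ∑ yt : Fin (2^q) → 𝒴,
    ((2:ℝ)^q)⁻¹ * superCh W q x yt * Real.logb 2 (condOut W q A x yt / condOut W q B x yt)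

/-- Indicator of a proposition. -/
noncomputable def ind (P : Prop) : ℝ := @ite ℝ P (Classical.propDecidable P) 1 0

/-- Total variation distance `V(P,Q) = (1/2)∑ |P−Q|`. -/
noncomputable def TV {α : Type} [Fintype α] (P Q : α → ℝ) : ℝ :=
  (1/2) * ∑ z, |P z - Q z|

/-- The level-`i` equivalent channel (for 0-indexed level `i₀`, take `i = i₀ + 1`). -/
noncomputable def equivCh {𝒵 : Type} [Fintype 𝒵] (Q0 Q1 : 𝒵 → ℝ) (i : ℕ)
    (z : Fin (2^i) → 𝒵) (x : Bool) : ℝ :=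
  ((2:ℝ)^(i-1))⁻¹ * ∑ j : Fin (2^i),
    if 2^(i-1) * (cond x 1 0) ≤ (j:ℕ) ∧ (j:ℕ) < 2^(i-1) * (cond x 1 0 + 1)
    then (∏ h, Q0 (z h)) * (Q1 (z j) / Q0 (z j)) else 0

/-- Distribution induced at Willie's output by `ℓ` uses of the PPM super channel when
the (0-indexed) levels `t < j` carry i.i.d. uniform bits and each level `t ≥ j`
carries a uniformly chosen codeword from its codebook; `Pout … 0` is the distribution
induced by the full coding scheme and `Pout … q` the product PPM output
distribution. -/
noncomputable def Pout {𝒵 : Type} [Fintype 𝒵] [DecidableEq 𝒵] (W : Bool → 𝒵 → ℝ)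
    (q ℓ : ℕ) (M : Fin q → ℕ) (c : ∀ t : Fin q, Fin (M t) → Fin ℓ → Bool) (j : ℕ)
    (zv : Fin ℓ → Fin (2^q) → 𝒵) : ℝ :=
  ∑ xs : {t : Fin q // (t:ℕ) < j} → Fin ℓ → Bool,
    ∑ u : ∀ t : {t : Fin q // j ≤ (t:ℕ)}, Fin (M t.1),
      (∏ _t : {t : Fin q // (t:ℕ) < j}, ((2:ℝ)^ℓ)⁻¹) *
      (∏ t : {t : Fin q // j ≤ (t:ℕ)}, ((M t.1 : ℝ))⁻¹) *
      ∏ p, superCh W q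
        (fun t => if h : (t:ℕ) < j then xs ⟨t, h⟩ p
                  else c t (u ⟨t, Nat.le_of_not_lt h⟩) p)
        (zv p)

lemma TV_triangle {α : Type} [Fintype α] (P Q R : α → ℝ) : TV P R ≤ TV P Q + TV Q R := by
  unfold TV
  rw [← mul_add, ← sum_add_distrib]
  gcongr with z
  exact abs_sub_le _ _ _

lemma TV_le_sum_range {α : Type} [Fintype α] (P : ℕ → α → ℝ) (n : ℕ) :
    TV (P 0) (P n) ≤ ∑ t ∈ range n, TV (P t) (P (t + 1)) := by
  induction n with
  | zero => simp [TV]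
  | succ n ih =>
    rw [sum_range_succ]
    exact (TV_triangle _ (P n) _).trans (by linarith)

lemma TV_comp_kernel_le {α β : Type} [Fintype α] [Fintype β] (P Q : α → ℝ) (K : α → β → ℝ)
    (hK0 : ∀ a b, 0 ≤ K a b) (hK1 : ∀ a, ∑ b, K a b = 1) :
    TV (fun b => ∑ a, P a * K a b) (fun b => ∑ a, Q a * K a b) ≤ TV P Q := by
  unfold TV
  gcongr
  calc ∑ b, |∑ a, P a * K a b - ∑ a, Q a * K a b|
      ≤ ∑ b, ∑ a, |P a - Q a| * K a b := by
        gcongr with b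
        rw [← sum_sub_distrib]
        refine (abs_sum_le_sum_abs _ _).trans_eq (sum_congr rfl fun a _ => ?_)
        rw [← sub_mul, abs_mul, abs_of_nonneg (hK0 a b)]
    _ = ∑ a, |P a - Q a| := by
        rw [sum_comm]
        simp only [← mul_sum, hK1, mul_one]

lemma ppmPos_bijective (q : ℕ) : Function.Bijective (ppmPos q) := by
  have h : ppmPos q = finFunctionFinEquiv ∘ fun x i => finTwoEquiv.symm (x i) := by
    funext x
    ext
    simp only [ppmPos, dIdx, Function.comp_apply, finFunctionFinEquiv_apply]
    refine sum_congr rfl fun i _ => ?_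
    cases x i
    · simp [show finTwoEquiv.symm false = 0 from rfl]
    · simp [show finTwoEquiv.symm true = 1 from rfl]
  rw [h]
  exact finFunctionFinEquiv.bijective.comp (Equiv.arrowCongr (.refl _) finTwoEquiv.symm).bijective

lemma sum_ppmPos {M : Type} [AddCommMonoid M] {q : ℕ} (f : Fin (2^q) → M) :
    ∑ x, f (ppmPos q x) = ∑ k, f k :=
  Fintype.sum_bijective _ (ppmPos_bijective q) _ _ fun _ => rfl

lemma sum_fun_snoc {M : Type} [AddCommMonoid M] (n : ℕ) (g : (Fin (n + 1) → Bool) → M) :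
    ∑ x, g x = ∑ a : Bool, ∑ y : Fin n → Bool, g (Fin.snoc y a) := by
  rw [← Fintype.sum_prod_type']
  exact Fintype.sum_equiv (Fin.snocEquiv _).symm _ _ fun x => by simp [Fin.snocEquiv]

lemma dIdx_snoc (n : ℕ) (y : Fin n → Bool) (b : Bool) :
    dIdx (n + 1) (Fin.snoc y b : Fin (n + 1) → Bool) = dIdx n y + 2^n * cond b 1 0 := by
  simp only [dIdx, Fin.sum_univ_castSucc, Fin.snoc_castSucc, Fin.snoc_last, Fin.val_castSucc,
    Fin.val_last]
  cases b <;> simp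

lemma dIdx_add (n m : ℕ) (x : Fin (n + m) → Bool) :
    dIdx (n + m) x =
      dIdx n (fun i => x (Fin.castAdd m i)) + 2^n * dIdx m (fun i => x (Fin.natAdd n i)) := by
  simp only [dIdx, Fin.sum_univ_add, mul_sum, Fin.val_castAdd, Fin.val_natAdd]
  congr 1
  refine sum_congr rfl fun i _ => ?_
  split <;> simp [pow_add]

def blockEquiv (n m : ℕ) : Fin (2^m) × Fin (2^n) ≃ Fin (2^(n + m)) :=
  finProdFinEquiv.trans (finCongr (by rw [pow_add, mul_comm]))

lemma blockEquiv_val (n m : ℕ) (H : Fin (2^m)) (r : Fin (2^n)) :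
    (blockEquiv n m (H, r) : ℕ) = r + 2^n * H := rfl

lemma ppmPos_add (n m : ℕ) (x : Fin (n + m) → Bool) :
    ppmPos (n + m) x = blockEquiv n m
      (ppmPos m fun i => x (Fin.natAdd n i), ppmPos n fun i => x (Fin.castAdd m i)) := by
  ext
  rw [blockEquiv_val]
  simp only [ppmPos, dIdx_add]

section Channel

variable {𝒵 : Type} [Fintype 𝒵] [DecidableEq 𝒵]

lemma superCh_eq_prod (W : Bool → 𝒵 → ℝ) (q : ℕ) (x : Fin q → Bool) (zz : Fin (2^q) → 𝒵) :
    superCh W q x zz = ∏ h, W (decide (h = ppmPos q x)) (zz h) := by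
  rw [← mul_prod_erase univ _ (mem_univ (ppmPos q x)), superCh, decide_eq_true rfl]
  congr 1
  exact prod_congr rfl fun h hh => by rw [decide_eq_false (ne_of_mem_erase hh)]

lemma superCh_eq_mul_ratio (W : Bool → 𝒵 → ℝ) (hpos : ∀ z, 0 < W false z) (q : ℕ)
    (x : Fin q → Bool) (zz : Fin (2^q) → 𝒵) :
    superCh W q x zz = (∏ h, W false (zz h)) *
      (W true (zz (ppmPos q x)) / W false (zz (ppmPos q x))) := by
  rw [superCh, ← mul_prod_erase univ _ (mem_univ (ppmPos q x))]
  field_simp [(hpos _).ne']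

/-- The PPM symbol of order `n + m` lies in the block of `2^n` slots selected by its `m` high
bits, where it is the PPM symbol of order `n` of its low bits. -/
lemma superCh_add (W : Bool → 𝒵 → ℝ) (n m : ℕ) (x : Fin (n + m) → Bool)
    (zz : Fin (2^(n + m)) → 𝒵) :
    superCh W (n + m) x zz =
      superCh W n (fun i => x (Fin.castAdd m i))
        (fun r => zz (blockEquiv n m (ppmPos m fun i => x (Fin.natAdd n i), r))) *
      ∏ H ∈ univ.erase (ppmPos m fun i => x (Fin.natAdd n i)), ∏ r,
        W false (zz (blockEquiv n m (H, r))) := by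
  rw [superCh_eq_prod, superCh_eq_prod, ppmPos_add, ← (blockEquiv n m).prod_comp,
    Fintype.prod_prod_type,
    ← mul_prod_erase univ _ (mem_univ (ppmPos m fun i => x (Fin.natAdd n i)))]
  congr 1
  · simp only [(blockEquiv n m).injective.eq_iff, Prod.mk.injEq, true_and]
  · refine prod_congr rfl fun H hH => prod_congr rfl fun r _ => ?_
    simp [(blockEquiv n m).injective.eq_iff, ne_of_mem_erase hH]

lemma equivCh_succ (W : Bool → 𝒵 → ℝ) (hpos : ∀ z, 0 < W false z) (n : ℕ)
    (zb : Fin (2^(n + 1)) → 𝒵) (b : Bool) :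
    equivCh (W false) (W true) (n + 1) zb b =
      ((2:ℝ)^n)⁻¹ * ∑ y : Fin n → Bool, superCh W (n + 1) (Fin.snoc y b) zb := by
  -- the interval condition in `equivCh` says that the top bit of the PPM symbol is `b`
  have hterm : ∀ (a : Bool) (y : Fin n → Bool),
      (if 2^n * cond b 1 0 ≤ (ppmPos (n + 1) (Fin.snoc y a) : ℕ) ∧
          (ppmPos (n + 1) (Fin.snoc y a) : ℕ) < 2^n * (cond b 1 0 + 1)
        then (∏ h, W false (zb h)) * (W true (zb (ppmPos (n + 1) (Fin.snoc y a))) /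
          W false (zb (ppmPos (n + 1) (Fin.snoc y a))))
        else 0) = if a = b then superCh W (n + 1) (Fin.snoc y a) zb else 0 := by
    intro a y
    have := dIdx_lt n y
    rw [← superCh_eq_mul_ratio W hpos]
    congr 1
    simp only [ppmPos, dIdx_snoc, eq_iff_iff]
    cases a <;> cases b <;> simp <;> omega
  rw [equivCh, Nat.add_sub_cancel, ← sum_ppmPos, sum_fun_snoc]
  simp only [hterm]
  rw [sum_comm]
  simp

/-- The channel that writes `zb` into block `H` and fills every other slot with an independent
`Q0`-sample. -/
noncomputable def blockKernel (Q0 : 𝒵 → ℝ) (n m : ℕ) (H : Fin (2^m)) (zb : Fin (2^n) → 𝒵)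
    (zz : Fin (2^(n + m)) → 𝒵) : ℝ :=
  ∏ pos, if ((blockEquiv n m).symm pos).1 = H then
      (if zz pos = zb ((blockEquiv n m).symm pos).2 then 1 else 0)
    else Q0 (zz pos)

lemma blockKernel_nonneg {Q0 : 𝒵 → ℝ} (hQ0 : IsPMF Q0) (n m : ℕ) (H : Fin (2^m))
    (zb : Fin (2^n) → 𝒵) (zz : Fin (2^(n + m)) → 𝒵) : 0 ≤ blockKernel Q0 n m H zb zz :=
  prod_nonneg fun pos _ => by split_ifs <;> first | exact hQ0.1 _ | norm_num

lemma sum_blockKernel {Q0 : 𝒵 → ℝ} (hQ0 : IsPMF Q0) (n m : ℕ) (H : Fin (2^m))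
    (zb : Fin (2^n) → 𝒵) : ∑ zz, blockKernel Q0 n m H zb zz = 1 := by
  unfold blockKernel
  rw [← Fintype.prod_sum fun pos y => if ((blockEquiv n m).symm pos).1 = H then
      (if y = zb ((blockEquiv n m).symm pos).2 then (1:ℝ) else 0) else Q0 y]
  refine prod_eq_one fun pos _ => ?_
  split_ifs
  · simp
  · exact hQ0.2

lemma sum_mul_blockKernel (Q0 : 𝒵 → ℝ) (n m : ℕ) (H : Fin (2^m)) (F : (Fin (2^n) → 𝒵) → ℝ)
    (zz : Fin (2^(n + m)) → 𝒵) :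
    ∑ zb, F zb * blockKernel Q0 n m H zb zz =
      F (fun r => zz (blockEquiv n m (H, r))) *
        ∏ H' ∈ univ.erase H, ∏ r, Q0 (zz (blockEquiv n m (H', r))) := by
  have hK : ∀ zb, blockKernel Q0 n m H zb zz =
      (if (fun r => zz (blockEquiv n m (H, r))) = zb then 1 else 0) *
        ∏ H' ∈ univ.erase H, ∏ r, Q0 (zz (blockEquiv n m (H', r))) := by
    intro zb
    rw [blockKernel, ← (blockEquiv n m).prod_comp, Fintype.prod_prod_type,
      ← mul_prod_erase univ _ (mem_univ H)]
    simp only [Equiv.symm_apply_apply, if_true]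
    congr 1
    · rw [Fintype.prod_boole]
      congr 1
      exact propext funext_iff.symm
    · exact prod_congr rfl fun H' hH' => prod_congr rfl fun r _ => if_neg (ne_of_mem_erase hH')
  simp [hK]

lemma avg_superCh_eq_sum_equivCh_mul_blockKernel (W : Bool → 𝒵 → ℝ)
    (hpos : ∀ z, 0 < W false z) (n m : ℕ) (b : Bool) (hi : Fin m → Bool)
    (zz : Fin (2^(n + 1 + m)) → 𝒵) :
    ((2:ℝ)^n)⁻¹ * ∑ y : Fin n → Bool, superCh W (n + 1 + m) (Fin.append (Fin.snoc y b) hi) zz =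
      ∑ zb, equivCh (W false) (W true) (n + 1) zb b *
        blockKernel (W false) (n + 1) m (ppmPos m hi) zb zz := by
  rw [sum_mul_blockKernel (W false) (n + 1) m _ fun zb => equivCh (W false) (W true) (n + 1) zb b,
    equivCh_succ W hpos, mul_assoc, sum_mul]
  congr 1
  refine sum_congr rfl fun y _ => ?_
  rw [superCh_add]
  simp only [Fin.append_left, Fin.append_right]

end Channel

section SubtypeSplit

variable {ι : Type} {P P' : ι → Prop} [DecidablePred P'] (a : ι) (hPa : P a) (hP'a : ¬P' a)
  (heq : ∀ i, P i → ¬P' i → i = a) (hPP' : ∀ i, P' i → P i)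
include hPa hP'a heq hPP'

def piSubtypeSplitEquiv (β : ι → Type) :
    (∀ i : {i // P i}, β i.1) ≃ β a × (∀ i : {i // P' i}, β i.1) where
  toFun g := (g ⟨a, hPa⟩, fun i => g ⟨i.1, hPP' i.1 i.2⟩)
  invFun bh i := if hc : P' i.1 then bh.2 ⟨i.1, hc⟩
    else cast (congrArg β (heq i.1 i.2 hc).symm) bh.1
  left_inv g := by
    funext ⟨i, hi⟩
    by_cases hc : P' i
    · simp only [dif_pos hc]
    · obtain rfl := heq i hi hc
      simp only [dif_neg hc, cast_eq]
  right_inv bh := by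
    ext i
    · simp only [dif_neg hP'a, cast_eq]
    · simp only [dif_pos i.2]

lemma sum_piSubtype_split [Fintype ι] [DecidableEq ι] [DecidablePred P] {β : ι → Type}
    [∀ i, Fintype (β i)] (f : (∀ i : {i // P i}, β i.1) → ℝ) :
    ∑ g, f g = ∑ b : β a, ∑ h : ∀ i : {i // P' i}, β i.1,
      f ((piSubtypeSplitEquiv a hPa hP'a heq hPP' β).symm (b, h)) := by
  rw [← Fintype.sum_prod_type']
  exact ((piSubtypeSplitEquiv a hPa hP'a heq hPP' β).symm.sum_comp f).symm

lemma prod_subtype_split [Fintype ι] [DecidableEq ι] [DecidablePred P] (f : ι → ℝ) :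
    ∏ i : {i // P i}, f i = f a * ∏ i : {i // P' i}, f i := by
  rw [← prod_subtype (univ.filter P) (by simp) f, ← prod_subtype (univ.filter P') (by simp) f,
    ← mul_prod_erase _ f (by simpa using hPa)]
  congr 2
  ext i
  simp only [mem_erase, mem_filter, mem_univ, true_and]
  exact ⟨fun ⟨hne, hi⟩ => by_contra fun hc => hne (heq i hi hc),
    fun hi => ⟨fun h => hP'a (h ▸ hi), hPP' i hi⟩⟩

end SubtypeSplit

lemma sum_lowBits {q : ℕ} (ℓ j : ℕ) (h : j ≤ q) (G : Fin ℓ → (Fin j → Bool) → ℝ) :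
    ∑ xs : {t : Fin q // (t:ℕ) < j} → Fin ℓ → Bool,
      (∏ _t : {t : Fin q // (t:ℕ) < j}, ((2:ℝ)^ℓ)⁻¹) *
        ∏ p, G p (fun r => xs (Fin.castLEquiv h r) p) =
      ∏ p, ((2:ℝ)^j)⁻¹ * ∑ y, G p y := by
  have hw : (∏ _t : {t : Fin q // (t:ℕ) < j}, ((2:ℝ)^ℓ)⁻¹) = ∏ _p : Fin ℓ, ((2:ℝ)^j)⁻¹ := by
    simp only [prod_const, card_univ, Fintype.card_fin_lt_of_le h, Fintype.card_fin, ← inv_pow,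
      ← pow_mul, mul_comm]
  rw [← mul_sum, hw, prod_mul_distrib, Fintype.prod_sum]
  congr 1
  exact Fintype.sum_equiv
    (((Fin.castLEquiv h).arrowCongr (.refl _)).symm.trans (.piComm fun _ _ => Bool)) _
    (fun Y : Fin ℓ → Fin j → Bool => ∏ p, G p (Y p)) fun xs => rfl

lemma sum_uniform_prod (ℓ : ℕ) (f : Fin ℓ → Bool → ℝ) :
    ∑ b : Fin ℓ → Bool, ((2:ℝ)^ℓ)⁻¹ * ∏ p, f p (b p) =
      ∏ p, ((1:ℝ)/2 * f p false + (1:ℝ)/2 * f p true) := by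
  have h : ((2:ℝ)^ℓ)⁻¹ = ∏ _p : Fin ℓ, (1:ℝ)/2 := by simp
  simp only [h, ← prod_mul_distrib]
  rw [← Fintype.prod_sum fun p x => (1:ℝ)/2 * f p x]
  exact prod_congr rfl fun p _ => (Fintype.sum_bool _).trans (add_comm _ _)

section Levels

variable {𝒵 : Type} [Fintype 𝒵] [DecidableEq 𝒵]

/-- Output law of the scheme when level `j` carries the word `b`, the levels below `j` carry
uniform bits and the levels above `j` carry uniformly chosen codewords. -/
noncomputable def levelKernel (W : Bool → 𝒵 → ℝ) (q ℓ : ℕ) (M : Fin q → ℕ)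
    (c : ∀ t : Fin q, Fin (M t) → Fin ℓ → Bool) (j : ℕ) (b : Fin ℓ → Bool)
    (zv : Fin ℓ → Fin (2^q) → 𝒵) : ℝ :=
  ∑ xs : {t : Fin q // (t:ℕ) < j} → Fin ℓ → Bool,
    ∑ u : ∀ t : {t : Fin q // j + 1 ≤ (t:ℕ)}, Fin (M t.1),
      (∏ _t : {t : Fin q // (t:ℕ) < j}, ((2:ℝ)^ℓ)⁻¹) *
      (∏ t : {t : Fin q // j + 1 ≤ (t:ℕ)}, ((M t.1 : ℝ))⁻¹) *
      ∏ p, superCh W q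
        (fun t => if h : (t:ℕ) < j then xs ⟨t, h⟩ p
          else if h' : j + 1 ≤ (t:ℕ) then c t (u ⟨t, h'⟩) p else b p)
        (zv p)

lemma Pout_eq_avg_levelKernel (W : Bool → 𝒵 → ℝ) (q ℓ : ℕ) (M : Fin q → ℕ)
    (c : ∀ t : Fin q, Fin (M t) → Fin ℓ → Bool) (j : ℕ) (hj : j < q) :
    Pout W q ℓ M c j =
      fun zv => (M ⟨j, hj⟩ : ℝ)⁻¹ * ∑ u₀, levelKernel W q ℓ M c j (c ⟨j, hj⟩ u₀) zv := by
  have hsplit := sum_piSubtype_split (P := fun t : Fin q => j ≤ (t:ℕ))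
    (P' := fun t : Fin q => j + 1 ≤ (t:ℕ)) (β := fun t => Fin (M t)) ⟨j, hj⟩ le_rfl (by simp)
    (fun t h h' => Fin.ext (by simp only at h h' ⊢; omega)) (fun t h => by omega)
  have hprod := prod_subtype_split (P := fun t : Fin q => j ≤ (t:ℕ))
    (P' := fun t : Fin q => j + 1 ≤ (t:ℕ)) ⟨j, hj⟩ le_rfl (by simp)
    (fun t h h' => Fin.ext (by simp only at h h' ⊢; omega)) (fun t h => by omega)
    fun t => (M t : ℝ)⁻¹
  funext zv
  simp only [Pout, levelKernel, hsplit, hprod, mul_sum]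
  rw [sum_comm]
  refine sum_congr rfl fun u₀ _ => sum_congr rfl fun xs _ => sum_congr rfl fun u _ => ?_
  rw [show ∀ A m B C : ℝ, A * (m * B) * C = m * (A * B * C) from fun _ _ _ _ => by ring]
  congr 3 with p
  congr 1 with t
  by_cases h : (t:ℕ) < j
  · simp only [dif_pos h]
  · by_cases h' : j + 1 ≤ (t:ℕ)
    · simp [piSubtypeSplitEquiv, dif_neg h, show j < (t:ℕ) from h']
    · obtain rfl : t = ⟨j, hj⟩ := Fin.ext (show (t:ℕ) = j by omega)
      simp [piSubtypeSplitEquiv]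

lemma Pout_succ_eq_avg_levelKernel (W : Bool → 𝒵 → ℝ) (q ℓ : ℕ) (M : Fin q → ℕ)
    (c : ∀ t : Fin q, Fin (M t) → Fin ℓ → Bool) (j : ℕ) (hj : j < q) :
    Pout W q ℓ M c (j + 1) = fun zv => ∑ b, ((2:ℝ)^ℓ)⁻¹ * levelKernel W q ℓ M c j b zv := by
  have hsplit := sum_piSubtype_split (P := fun t : Fin q => (t:ℕ) < j + 1)
    (P' := fun t : Fin q => (t:ℕ) < j) (β := fun _ => Fin ℓ → Bool) ⟨j, hj⟩ (by simp) (by simp)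
    (fun t h h' => Fin.ext (by simp only at h h' ⊢; omega)) (fun t h => by omega)
  have hprod := prod_subtype_split (P := fun t : Fin q => (t:ℕ) < j + 1)
    (P' := fun t : Fin q => (t:ℕ) < j) ⟨j, hj⟩ (by simp) (by simp)
    (fun t h h' => Fin.ext (by simp only at h h' ⊢; omega)) (fun t h => by omega)
    fun _ => ((2:ℝ)^ℓ)⁻¹
  funext zv
  simp only [Pout, levelKernel, hsplit, hprod, mul_sum]
  refine sum_congr rfl fun b _ => sum_congr rfl fun xs _ => sum_congr rfl fun u _ => ?_
  rw [show ∀ m A B C : ℝ, m * A * B * C = m * (A * B * C) from fun _ _ _ _ => by ring]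
  congr 3 with p
  congr 1 with t
  by_cases h : (t:ℕ) < j
  · simp [piSubtypeSplitEquiv, h, show (t:ℕ) < j + 1 by omega]
  · by_cases h' : j + 1 ≤ (t:ℕ)
    · simp [h, show ¬(t:ℕ) < j + 1 by omega, h']
    · obtain rfl : t = ⟨j, hj⟩ := Fin.ext (show (t:ℕ) = j by omega)
      simp [piSubtypeSplitEquiv]

lemma Pout_self (W : Bool → 𝒵 → ℝ) (q ℓ : ℕ) (M : Fin q → ℕ)
    (c : ∀ t : Fin q, Fin (M t) → Fin ℓ → Bool) :
    Pout W q ℓ M c q =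
      fun zv => ∏ p, ((2:ℝ)^q)⁻¹ * ∑ x : Fin q → Bool, superCh W q x (zv p) := by
  funext zv
  have : IsEmpty {t : Fin q // q ≤ (t:ℕ)} := ⟨fun t => (t.1.2.trans_le t.2).false⟩
  rw [← sum_lowBits ℓ q le_rfl]
  simp only [Pout, Fintype.sum_unique, univ_eq_empty, prod_empty, mul_one]
  refine sum_congr rfl fun xs _ => ?_
  congr 2 with p
  congr 1 with t
  simp [t.2]

end Levels

section Lift

variable {𝒵 : Type} [Fintype 𝒵] [DecidableEq 𝒵] {j m ℓ : ℕ} {M : Fin (j + 1 + m) → ℕ}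

def highBits (c : ∀ t, Fin (M t) → Fin ℓ → Bool)
    (u : ∀ t : {t : Fin (j + 1 + m) // j + 1 ≤ (t:ℕ)}, Fin (M t.1)) (p : Fin ℓ) : Fin m → Bool :=
  fun r => c (Fin.natAdd (j + 1) r) (u ⟨Fin.natAdd (j + 1) r, by simp⟩) p

lemma levelInput_eq_append (c : ∀ t, Fin (M t) → Fin ℓ → Bool)
    (xs : {t : Fin (j + 1 + m) // (t:ℕ) < j} → Fin ℓ → Bool)
    (u : ∀ t : {t : Fin (j + 1 + m) // j + 1 ≤ (t:ℕ)}, Fin (M t.1)) (b : Fin ℓ → Bool)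
    (p : Fin ℓ) :
    (fun t : Fin (j + 1 + m) => if h : (t:ℕ) < j then xs ⟨t, h⟩ p
      else if h' : j + 1 ≤ (t:ℕ) then c t (u ⟨t, h'⟩) p else b p) =
    Fin.append (Fin.snoc (fun r => xs (Fin.castLEquiv (by omega) r) p) (b p)) (highBits c u p) := by
  funext t
  refine Fin.addCases (fun i => ?_) (fun r => ?_) t
  · rw [Fin.append_left]
    refine Fin.lastCases ?_ (fun k => ?_) i
    · simp
    · simp only [Fin.snoc_castSucc, Fin.val_castAdd, Fin.val_castSucc, k.2, dif_pos]
      rfl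
  · simp [highBits, show ¬ j + 1 + (r:ℕ) < j by omega]

/-- Embeds the outputs of `ℓ` uses of the level-`j` equivalent channel into PPM outputs, each in
the block of slots selected by the codewords of the higher levels. -/
noncomputable def liftKernel (Q0 : 𝒵 → ℝ) (c : ∀ t, Fin (M t) → Fin ℓ → Bool)
    (zeq : Fin ℓ → Fin (2^(j + 1)) → 𝒵) (zv : Fin ℓ → Fin (2^(j + 1 + m)) → 𝒵) : ℝ :=
  ∑ u : ∀ t : {t : Fin (j + 1 + m) // j + 1 ≤ (t:ℕ)}, Fin (M t.1),
    (∏ t : {t : Fin (j + 1 + m) // j + 1 ≤ (t:ℕ)}, ((M t.1 : ℝ))⁻¹) *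
      ∏ p, blockKernel Q0 (j + 1) m (ppmPos m (highBits c u p)) (zeq p) (zv p)

lemma liftKernel_nonneg {Q0 : 𝒵 → ℝ} (hQ0 : IsPMF Q0) (c : ∀ t, Fin (M t) → Fin ℓ → Bool)
    (zeq : Fin ℓ → Fin (2^(j + 1)) → 𝒵) (zv : Fin ℓ → Fin (2^(j + 1 + m)) → 𝒵) :
    0 ≤ liftKernel Q0 c zeq zv :=
  sum_nonneg fun _ _ => mul_nonneg (prod_nonneg fun _ _ => by positivity)
    (prod_nonneg fun _ _ => blockKernel_nonneg hQ0 _ _ _ _ _)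

lemma sum_liftKernel {Q0 : 𝒵 → ℝ} (hQ0 : IsPMF Q0) (hM : ∀ t, 1 ≤ M t)
    (c : ∀ t, Fin (M t) → Fin ℓ → Bool) (zeq : Fin ℓ → Fin (2^(j + 1)) → 𝒵) :
    ∑ zv, liftKernel Q0 c zeq zv = 1 := by
  unfold liftKernel
  rw [sum_comm]
  simp only [← mul_sum, ← Fintype.prod_sum, sum_blockKernel hQ0, prod_const_one, mul_one]
  refine (Fintype.prod_sum fun (t : {t : Fin (j + 1 + m) // j + 1 ≤ (t:ℕ)}) (_ : Fin (M t.1)) =>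
    ((M t.1 : ℝ))⁻¹).symm.trans (prod_eq_one fun t _ => ?_)
  have : (M t.1 : ℝ) ≠ 0 := by have := hM t.1; positivity
  simp [this]

lemma levelKernel_eq_sum_mul_liftKernel (W : Bool → 𝒵 → ℝ) (hpos : ∀ z, 0 < W false z)
    (c : ∀ t, Fin (M t) → Fin ℓ → Bool) (b : Fin ℓ → Bool)
    (zv : Fin ℓ → Fin (2^(j + 1 + m)) → 𝒵) :
    levelKernel W (j + 1 + m) ℓ M c j b zv =
      ∑ zeq, (∏ p, equivCh (W false) (W true) (j + 1) (zeq p) (b p)) *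
        liftKernel (W false) c zeq zv := by
  have hlow : ∀ u : ∀ t : {t : Fin (j + 1 + m) // j + 1 ≤ (t:ℕ)}, Fin (M t.1),
      ∑ xs : {t : Fin (j + 1 + m) // (t:ℕ) < j} → Fin ℓ → Bool,
        (∏ _t : {t : Fin (j + 1 + m) // (t:ℕ) < j}, ((2:ℝ)^ℓ)⁻¹) *
          ∏ p, superCh W (j + 1 + m)
            (Fin.append (Fin.snoc (fun r => xs (Fin.castLEquiv (by omega) r) p) (b p))
              (highBits c u p)) (zv p) =
      ∑ zeq : Fin ℓ → Fin (2^(j + 1)) → 𝒵, ∏ p, equivCh (W false) (W true) (j + 1) (zeq p) (b p) *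
        blockKernel (W false) (j + 1) m (ppmPos m (highBits c u p)) (zeq p) (zv p) := by
    intro u
    rw [sum_lowBits ℓ j (by omega)
      (fun p y => superCh W (j + 1 + m) (Fin.append (Fin.snoc y (b p)) (highBits c u p)) (zv p))]
    simp only [avg_superCh_eq_sum_equivCh_mul_blockKernel W hpos, Fintype.prod_sum]
  simp only [levelKernel, liftKernel, mul_sum]
  rw [sum_comm]
  conv_rhs => rw [sum_comm]
  refine sum_congr rfl fun u _ => ?_
  set B := ∏ t : {t : Fin (j + 1 + m) // j + 1 ≤ (t:ℕ)}, ((M t.1 : ℝ))⁻¹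
  simp only [levelInput_eq_append, mul_comm _ B, mul_left_comm _ B, ← mul_sum]
  rw [mul_assoc, mul_sum, hlow u]
  simp only [prod_mul_distrib]

end Lift

lemma TV_Pout_succ_le {𝒵 : Type} [Fintype 𝒵] [DecidableEq 𝒵] (W : Bool → 𝒵 → ℝ)
    (hW0 : IsPMF (W false)) (hpos : ∀ z, 0 < W false z) (q ℓ : ℕ) (M : Fin q → ℕ)
    (hM : ∀ t, 1 ≤ M t) (c : ∀ t : Fin q, Fin (M t) → Fin ℓ → Bool) (t : Fin q) :
    TV (Pout W q ℓ M c t) (Pout W q ℓ M c (t + 1)) ≤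
      TV (fun zv : Fin ℓ → Fin (2^((t:ℕ) + 1)) → 𝒵 =>
            (M t : ℝ)⁻¹ * ∑ u : Fin (M t),
              ∏ p, equivCh (W false) (W true) ((t:ℕ) + 1) (zv p) (c t u p))
         (fun zv => ∏ p, ((1:ℝ)/2 * equivCh (W false) (W true) ((t:ℕ) + 1) (zv p) false
            + (1:ℝ)/2 * equivCh (W false) (W true) ((t:ℕ) + 1) (zv p) true)) := by
  obtain ⟨j, hj⟩ := t
  obtain ⟨m, rfl⟩ : ∃ m, q = j + 1 + m := ⟨q - (j + 1), by omega⟩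
  refine (le_of_eq ?_).trans (TV_comp_kernel_le _ _ (liftKernel (W false) c)
    (liftKernel_nonneg hW0 c) (sum_liftKernel hW0 hM c))
  rw [Pout_eq_avg_levelKernel W _ ℓ M c j hj, Pout_succ_eq_avg_levelKernel W _ ℓ M c j hj]
  simp only [← sum_uniform_prod]
  congr 1 <;> funext zv <;>
    simp only [levelKernel_eq_sum_mul_liftKernel W hpos, mul_sum, sum_mul, mul_assoc] <;>
    exact sum_comm

theorem stmt17_general {𝒵 : Type} [Fintype 𝒵] [DecidableEq 𝒵]
    (q ℓ : ℕ)
    (W : Bool → 𝒵 → ℝ) (hW : ∀ x, IsPMF (W x)) (hpos : ∀ z, 0 < W false z)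
    (M : Fin q → ℕ) (hM : ∀ t, 1 ≤ M t)
    (c : ∀ t : Fin q, Fin (M t) → Fin ℓ → Bool)
    (δ : Fin q → ℝ) :
    (∀ t : Fin q,
      TV (fun zv : Fin ℓ → Fin (2^((t:ℕ)+1)) → 𝒵 =>
            (M t : ℝ)⁻¹ * ∑ u : Fin (M t),
              ∏ p, equivCh (W false) (W true) ((t:ℕ)+1) (zv p) (c t u p))
         (fun zv => ∏ p, ((1:ℝ)/2 * equivCh (W false) (W true) ((t:ℕ)+1) (zv p) false
            + (1:ℝ)/2 * equivCh (W false) (W true) ((t:ℕ)+1) (zv p) true)) ≤ δ t →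
      TV (Pout W q ℓ M c (t:ℕ)) (Pout W q ℓ M c ((t:ℕ)+1)) ≤ δ t) ∧
    ((∀ t : Fin q,
      TV (fun zv : Fin ℓ → Fin (2^((t:ℕ)+1)) → 𝒵 =>
            (M t : ℝ)⁻¹ * ∑ u : Fin (M t),
              ∏ p, equivCh (W false) (W true) ((t:ℕ)+1) (zv p) (c t u p))
         (fun zv => ∏ p, ((1:ℝ)/2 * equivCh (W false) (W true) ((t:ℕ)+1) (zv p) false
            + (1:ℝ)/2 * equivCh (W false) (W true) ((t:ℕ)+1) (zv p) true)) ≤ δ t) →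
      TV (Pout W q ℓ M c 0)
         (fun zv => ∏ p, ((2:ℝ)^q)⁻¹ * ∑ x : Fin q → Bool, superCh W q x (zv p))
        ≤ ∑ t, δ t) := by
  refine ⟨fun t h => (TV_Pout_succ_le W (hW false) hpos q ℓ M hM c t).trans h, fun hall => ?_⟩
  rw [← Pout_self W q ℓ M c]
  calc TV (Pout W q ℓ M c 0) (Pout W q ℓ M c q)
      ≤ ∑ t ∈ range q, TV (Pout W q ℓ M c t) (Pout W q ℓ M c (t + 1)) :=
        TV_le_sum_range (Pout W q ℓ M c) q
    _ = ∑ t : Fin q, TV (Pout W q ℓ M c t) (Pout W q ℓ M c (t + 1)) :=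
        (Fin.sum_univ_eq_sum_range (fun t => TV (Pout W q ℓ M c t) (Pout W q ℓ M c (t + 1))) q).symm
    _ ≤ ∑ t, δ t :=
        sum_le_sum fun t _ => (TV_Pout_succ_le W (hW false) hpos q ℓ M hM c t).trans (hall t)

/-- Lemma 6 (covertness of MLC-PPM from per-level resolvability): if the code of
(0-indexed) level `t` achieves resolvability `δ_t` in total variation for the
memoryless extension of its equivalent channel, then
`V(P_Z̃^{(t)}, P_Z̃^{(t+1)}) ≤ δ_t` regardless of the codebooks of the higher levels;
consequently if this holds for every level, then
`V(P_Z̃, (Q_PPM^m)^{⊗ℓ}) ≤ ∑_t δ_t`. -/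
theorem stmt17 {𝒵 : Type} [Fintype 𝒵] [DecidableEq 𝒵]
    (q ℓ : ℕ) (hq : 1 ≤ q) (hℓ : 1 ≤ ℓ)
    (W : Bool → 𝒵 → ℝ) (hW : ∀ x, IsPMF (W x)) (hpos : ∀ z, 0 < W false z)
    (M : Fin q → ℕ) (hM : ∀ t, 1 ≤ M t)
    (c : ∀ t : Fin q, Fin (M t) → Fin ℓ → Bool)
    (δ : Fin q → ℝ) :
    (∀ t : Fin q,
      TV (fun zv : Fin ℓ → Fin (2^((t:ℕ)+1)) → 𝒵 =>
            (M t : ℝ)⁻¹ * ∑ u : Fin (M t),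
              ∏ p, equivCh (W false) (W true) ((t:ℕ)+1) (zv p) (c t u p))
         (fun zv => ∏ p, ((1:ℝ)/2 * equivCh (W false) (W true) ((t:ℕ)+1) (zv p) false
            + (1:ℝ)/2 * equivCh (W false) (W true) ((t:ℕ)+1) (zv p) true)) ≤ δ t →
      TV (Pout W q ℓ M c (t:ℕ)) (Pout W q ℓ M c ((t:ℕ)+1)) ≤ δ t) ∧
    ((∀ t : Fin q,
      TV (fun zv : Fin ℓ → Fin (2^((t:ℕ)+1)) → 𝒵 =>
            (M t : ℝ)⁻¹ * ∑ u : Fin (M t),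
              ∏ p, equivCh (W false) (W true) ((t:ℕ)+1) (zv p) (c t u p))
         (fun zv => ∏ p, ((1:ℝ)/2 * equivCh (W false) (W true) ((t:ℕ)+1) (zv p) false
            + (1:ℝ)/2 * equivCh (W false) (W true) ((t:ℕ)+1) (zv p) true)) ≤ δ t) →
      TV (Pout W q ℓ M c 0)
         (fun zv => ∏ p, ((2:ℝ)^q)⁻¹ * ∑ x : Fin q → Bool, superCh W q x (zv p))
        ≤ ∑ t, δ t) :=
  stmt17_general q ℓ W hW hpos M hM c δ
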